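/- Let H be a nonnegative self-adjoint operator, α > 1, N a natural number, and λ ≥ 0. If there exists a sequence ψₙ in the domain of H with ‖ψₙ‖ = 1 such that ⟨(H+α)^{-i}ψₙ, (H−λ)ψₙ⟩ → 0 for both i = N and i = N+1, and ⟨ψₙ, (H−λ)ψₙ⟩ → 0, then λ ∈ σ(H). -/

import Mathlib

open Filter Topology

/-!
Let `D = H - λ` and `R = (H + α)⁻¹`. Since `H ≥ 0` and `α > 0`, `H + α` is strictly positive in the
C⋆-algebra of bounded operators, hence so are `R` and `R ^ (N + 1)`, which are therefore bounded
below by some `r > 0`. The resolvent identity `R ^ N - (λ + α) R ^ (N + 1) = R ^ (N + 1) D` turns the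
two hypotheses into `⟪R ^ (N + 1) D ψₙ, D ψₙ⟫ → 0`, so `D ψₙ → 0`: the unit vectors `ψₙ` are
approximate eigenvectors, and `D` cannot be invertible.
-/

section StrictlyPositive

variable {A : Type*} [CStarAlgebra A] [PartialOrder A] [StarOrderedRing A]

lemma IsStrictlyPositive.pow {a : A} (ha : IsStrictlyPositive a) (n : ℕ) :
    IsStrictlyPositive (a ^ n) :=
  (ha.isUnit.pow n).isStrictlyPositive (CStarAlgebra.pow_nonneg ha.nonneg n)

lemma IsStrictlyPositive.of_mul_eq_one {a b : A} (ha : IsStrictlyPositive a)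
    (hab : a * b = 1) (hba : b * a = 1) : IsStrictlyPositive b := by
  have hb : b = Ring.inverse a := by
    rw [Ring.inverse_unit ⟨a, b, hab, hba⟩]; rfl
  exact hb ▸ ha.ringInverse

end StrictlyPositive

lemma pow_sub_smul_pow_succ_eq_pow_succ_mul_sub {𝕜 A : Type*} [CommRing 𝕜] [Ring A]
    [Algebra 𝕜 A] {h r : A} {a b : 𝕜} (hr : r * (h + a • 1) = 1) (n : ℕ) :
    r ^ n - (b + a) • r ^ (n + 1) = r ^ (n + 1) * (h - b • 1) := by
  have : r ^ (n + 1) * (h + a • 1) = r ^ n := by rw [pow_succ, mul_assoc, hr, mul_one]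
  calc r ^ n - (b + a) • r ^ (n + 1)
      = r ^ (n + 1) * (h + a • 1) - (b + a) • r ^ (n + 1) := by rw [this]
    _ = r ^ (n + 1) * (h - b • 1) := by
      rw [add_smul, mul_add, mul_sub, mul_smul_comm, mul_smul_comm, mul_one]; abel

namespace ContinuousLinearMap

variable {E : Type*} [NormedAddCommGroup E] [InnerProductSpace ℂ E]

lemma mul_norm_sq_le_re_inner_of_algebraMap_le {S : E →L[ℂ] E} {r : ℝ}
    (h : algebraMap ℝ (E →L[ℂ] E) r ≤ S) (x : E) :
    r * ‖x‖ ^ 2 ≤ (inner ℂ (S x) x).re := by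
  have := ((le_def _ _).mp h).re_inner_nonneg_left x
  rw [sub_apply, inner_sub_left, map_sub, Algebra.algebraMap_eq_smul_one, smul_apply,
    one_apply_eq_self, RCLike.real_smul_eq_coe_smul (K := ℂ), inner_smul_real_left,
    RCLike.smul_re, inner_self_eq_norm_sq] at this
  exact sub_nonneg.mp this

variable [CompleteSpace E]

lemma _root_.IsStrictlyPositive.exists_pos_mul_norm_sq_le {S : E →L[ℂ] E}
    (hS : IsStrictlyPositive S) : ∃ r > 0, ∀ x, r * ‖x‖ ^ 2 ≤ (inner ℂ (S x) x).re := by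
  rcases subsingleton_or_nontrivial E with hE | hE
  · exact ⟨1, one_pos, fun x ↦ by simp [Subsingleton.elim x 0]⟩
  obtain ⟨r, hr, hrS⟩ := (CFC.exists_pos_algebraMap_le_iff hS.isSelfAdjoint).2
    fun x hx ↦ hS.spectrum_pos hx
  exact ⟨r, hr, mul_norm_sq_le_re_inner_of_algebraMap_le hrS⟩

lemma _root_.IsStrictlyPositive.tendsto_zero_of_tendsto_inner_apply {S : E →L[ℂ] E}
    (hS : IsStrictlyPositive S) {ι : Type*} {l : Filter ι} {v : ι → E}
    (h : Tendsto (fun i ↦ inner ℂ (S (v i)) (v i)) l (𝓝 0)) : Tendsto v l (𝓝 0) := by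
  obtain ⟨r, hr, hrS⟩ := hS.exists_pos_mul_norm_sq_le
  have hsq : Tendsto (fun i ↦ ‖v i‖ ^ 2) l (𝓝 0) :=
    squeeze_zero (fun i ↦ sq_nonneg _) (fun i ↦ (le_div_iff₀' hr).2 (hrS (v i)))
      (by simpa using ((Complex.continuous_re.tendsto 0).comp h).div_const r)
  have hnorm : Tendsto (fun i ↦ ‖v i‖) l (𝓝 0) := by
    simpa [Function.comp_def, Real.sqrt_sq (norm_nonneg _)] using
      (Real.continuous_sqrt.tendsto 0).comp hsq
  exact tendsto_zero_iff_norm_tendsto_zero.2 hnorm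

end ContinuousLinearMap

section ApproximateEigenvector

variable {𝕜 E : Type*} [NontriviallyNormedField 𝕜] [NormedAddCommGroup E] [NormedSpace 𝕜 E]
  {ι : Type*} {l : Filter ι} [l.NeBot] {ψ : ι → E}

lemma ContinuousLinearMap.not_isUnit_of_tendsto_apply_zero {A : E →L[𝕜] E}
    (hψ : ∀ i, ‖ψ i‖ = 1) (h : Tendsto (fun i ↦ A (ψ i)) l (𝓝 0)) : ¬IsUnit A := by
  rintro ⟨u, rfl⟩
  have hψ0 : Tendsto ψ l (𝓝 0) := by
    simpa [Function.comp_def, ← mul_apply_eq_comp] using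
      ((↑u⁻¹ : E →L[𝕜] E).continuous.tendsto 0).comp h
  have hψ1 : Tendsto (fun i ↦ ‖ψ i‖) l (𝓝 1) := by simp only [hψ, tendsto_const_nhds]
  exact one_ne_zero (tendsto_nhds_unique hψ1 (tendsto_norm_zero.comp hψ0))

lemma ContinuousLinearMap.mem_spectrum_of_tendsto_sub_smul_one_apply {H : E →L[𝕜] E} {μ : 𝕜}
    (hψ : ∀ i, ‖ψ i‖ = 1) (h : Tendsto (fun i ↦ (H - μ • 1) (ψ i)) l (𝓝 0)) :
    μ ∈ spectrum 𝕜 H := by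
  rw [spectrum.mem_iff, ← IsUnit.neg_iff, neg_sub, Algebra.algebraMap_eq_smul_one]
  exact not_isUnit_of_tendsto_apply_zero hψ h

end ApproximateEigenvector

theorem weyl_resolvent_power_criterion_general
    {ℋ : Type*} [NormedAddCommGroup ℋ] [InnerProductSpace ℂ ℋ] [CompleteSpace ℋ]
    (H : ℋ →L[ℂ] ℋ) (hHpos : H.IsPositive)
    (α : ℝ) (hα : 1 < α) (N : ℕ)
    (R : ℋ →L[ℂ] ℋ) (hR1 : R * (H + (α : ℂ) • 1) = 1)
    (hR2 : (H + (α : ℂ) • 1) * R = 1)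
    (lam : ℝ)
    (ψ : ℕ → ℋ) (hψ : ∀ n, ‖ψ n‖ = 1)
    (hN : Tendsto (fun n =>
        (inner ℂ ((R ^ N) (ψ n)) ((H - (lam : ℂ) • 1) (ψ n)) : ℂ)) atTop (nhds 0))
    (hN1 : Tendsto (fun n =>
        (inner ℂ ((R ^ (N + 1)) (ψ n)) ((H - (lam : ℂ) • 1) (ψ n)) : ℂ))
        atTop (nhds 0)) :
    (lam : ℂ) ∈ spectrum ℂ H := by
  set D := H - (lam : ℂ) • 1
  have hαsmul : (α : ℂ) • (1 : ℋ →L[ℂ] ℋ) = algebraMap ℝ _ α := by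
    rw [Algebra.algebraMap_eq_smul_one, Complex.coe_smul]
  have hT : IsStrictlyPositive (H + (α : ℂ) • 1) := hαsmul ▸
    IsStrictlyPositive.nonneg_add ((ContinuousLinearMap.nonneg_iff_isPositive H).2 hHpos)
      (isStrictlyPositive_algebraMap (by linarith))
  have hR : IsStrictlyPositive R := hT.of_mul_eq_one hR2 hR1
  have hquad : Tendsto (fun n ↦ inner ℂ ((R ^ (N + 1)) (D (ψ n))) (D (ψ n))) atTop (𝓝 0) := by
    have hcomb := hN.sub (hN1.const_mul ((lam : ℂ) + α))
    rw [mul_zero, sub_zero] at hcomb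
    refine hcomb.congr fun n ↦ ?_
    rw [← mul_apply_eq_comp, ← pow_sub_smul_pow_succ_eq_pow_succ_mul_sub hR1]
    simp only [sub_apply (R ^ N), smul_apply, inner_sub_left, inner_smul_left,
      map_add, Complex.conj_ofReal]
  exact ContinuousLinearMap.mem_spectrum_of_tendsto_sub_smul_one_apply hψ
    ((hR.pow (N + 1)).tendsto_zero_of_tendsto_inner_apply hquad)

/-- Weyl criterion with powers of the resolvent: if `α > 1`, `N ∈ ℕ`, `λ ≥ 0`,
`R = (H+α)⁻¹` is the bounded resolvent, and there is a sequence of unit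
vectors `ψₙ` with `⟨(H+α)^{-i}ψₙ, (H−λ)ψₙ⟩ → 0` for `i = N` and `i = N+1`, and
`⟨ψₙ, (H−λ)ψₙ⟩ → 0`, then `λ ∈ σ(H)`. -/
theorem weyl_resolvent_power_criterion
    {ℋ : Type*} [NormedAddCommGroup ℋ] [InnerProductSpace ℂ ℋ] [CompleteSpace ℋ]
    (H : ℋ →L[ℂ] ℋ) (hH : IsSelfAdjoint H) (hHpos : H.IsPositive)
    (α : ℝ) (hα : 1 < α) (N : ℕ)
    (R : ℋ →L[ℂ] ℋ) (hR1 : R * (H + (α : ℂ) • 1) = 1)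
    (hR2 : (H + (α : ℂ) • 1) * R = 1)
    (lam : ℝ) (hlam_nonneg : 0 ≤ lam)
    (ψ : ℕ → ℋ) (hψ : ∀ n, ‖ψ n‖ = 1)
    (hN : Tendsto (fun n =>
        (inner ℂ ((R ^ N) (ψ n)) ((H - (lam : ℂ) • 1) (ψ n)) : ℂ)) atTop (nhds 0))
    (hN1 : Tendsto (fun n =>
        (inner ℂ ((R ^ (N + 1)) (ψ n)) ((H - (lam : ℂ) • 1) (ψ n)) : ℂ))
        atTop (nhds 0))
    (h2 : Tendsto (fun n => (inner ℂ (ψ n) ((H - (lam : ℂ) • 1) (ψ n)) : ℂ))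
        atTop (nhds 0)) :
    (lam : ℂ) ∈ spectrum ℂ H :=
  weyl_resolvent_power_criterion_general H hHpos α hα N R hR1 hR2 lam ψ hψ hN hN1
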